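/- arXiv:1906.02435 — 5 statements merged into one kernel-verified Lean document; each statement's English description precedes it below -/
import Mathlib

section
/- For any orthogonal matrix A in O(n,ℝ), the sum of fourth powers of its entries lies in the interval [1, n], and it equals n if and only if A is a signed permutation matrix (every entry is 0, 1, or -1). -/
/-!
For an orthogonal `A` every column is a unit vector, so `∑ aᵢⱼ² = n` and `aᵢⱼ² ≤ 1`.
Hence `aᵢⱼ⁴ ≤ aᵢⱼ²`, giving `‖A‖₄⁴ ≤ n`, with equality exactly when every `aᵢⱼ² ∈ {0, 1}`.
The lower bound is Cauchy–Schwarz over the `n²` entries: `n² = (∑ aᵢⱼ²)² ≤ n² ∑ aᵢⱼ⁴`.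
-/

open Matrix Finset

/-- The fourth power of the entrywise ℓ⁴-norm of a matrix. -/
def l4pow4 {n : ℕ} (A : Matrix (Fin n) (Fin n) ℝ) : ℝ :=
  ∑ i, ∑ j, A i j ^ 4

/-- A signed permutation matrix: an orthogonal matrix all of whose entries are 0, 1 or -1. -/
def IsSignedPerm {n : ℕ} (P : Matrix (Fin n) (Fin n) ℝ) : Prop :=
  Pᵀ * P = 1 ∧ ∀ i j, P i j = 0 ∨ P i j = 1 ∨ P i j = -1

lemma pow_four_eq_sq_iff {a : ℝ} : a ^ 4 = a ^ 2 ↔ a = 0 ∨ a = 1 ∨ a = -1 := by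
  have factor : a ^ 4 - a ^ 2 = a ^ 2 * ((a - 1) * (a + 1)) := by ring
  rw [← sub_eq_zero, factor, mul_eq_zero, mul_eq_zero, pow_eq_zero_iff two_ne_zero,
    sub_eq_zero, add_eq_zero_iff_eq_neg]

namespace Matrix

variable {m n : Type*} [Fintype m] [DecidableEq n] {A : Matrix m n ℝ}

lemma sum_sq_col_eq_one_of_transpose_mul_self (hA : Aᵀ * A = 1) (j : n) :
    ∑ i, A i j ^ 2 = 1 := by
  simpa [mul_apply, sq] using congrFun (congrFun hA j) j

lemma sq_le_one_of_transpose_mul_self (hA : Aᵀ * A = 1) (i : m) (j : n) : A i j ^ 2 ≤ 1 :=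
  calc A i j ^ 2 ≤ ∑ k, A k j ^ 2 :=
        single_le_sum (f := fun k ↦ A k j ^ 2) (fun _ _ ↦ sq_nonneg _) (mem_univ i)
    _ = 1 := sum_sq_col_eq_one_of_transpose_mul_self hA j

lemma pow_four_le_sq_of_transpose_mul_self (hA : Aᵀ * A = 1) (i : m) (j : n) :
    A i j ^ 4 ≤ A i j ^ 2 := by
  nlinarith [sq_nonneg (A i j), sq_le_one_of_transpose_mul_self hA i j]

lemma sum_sum_sq_eq_card_of_transpose_mul_self [Fintype n] (hA : Aᵀ * A = 1) :
    ∑ i, ∑ j, A i j ^ 2 = Fintype.card n := by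
  simp [sum_comm (γ := m), sum_sq_col_eq_one_of_transpose_mul_self hA]

lemma sum_sum_pow_four_le_card_of_transpose_mul_self [Fintype n] (hA : Aᵀ * A = 1) :
    ∑ i, ∑ j, A i j ^ 4 ≤ Fintype.card n :=
  calc ∑ i, ∑ j, A i j ^ 4 ≤ ∑ i, ∑ j, A i j ^ 2 :=
        sum_le_sum fun i _ ↦ sum_le_sum fun j _ ↦ pow_four_le_sq_of_transpose_mul_self hA i j
    _ = Fintype.card n := sum_sum_sq_eq_card_of_transpose_mul_self hA

lemma sum_sum_pow_four_eq_card_iff_of_transpose_mul_self [Fintype n] (hA : Aᵀ * A = 1) :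
    ∑ i, ∑ j, A i j ^ 4 = Fintype.card n ↔ ∀ i j, A i j = 0 ∨ A i j = 1 ∨ A i j = -1 := by
  have entry_le := pow_four_le_sq_of_transpose_mul_self hA
  rw [← sum_sum_sq_eq_card_of_transpose_mul_self hA,
    sum_eq_sum_iff_of_le fun i _ ↦ sum_le_sum fun j _ ↦ entry_le i j]
  simp only [mem_univ, forall_const, sum_eq_sum_iff_of_le fun j _ ↦ entry_le _ j,
    pow_four_eq_sq_iff]

lemma one_le_sum_sum_pow_four_of_transpose_mul_self [Fintype n] [Nonempty n] {A : Matrix n n ℝ}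
    (hA : Aᵀ * A = 1) : 1 ≤ ∑ i, ∑ j, A i j ^ 4 := by
  have cauchy_schwarz := sq_sum_le_card_mul_sum_sq (s := (univ : Finset (n × n)))
    (f := fun p ↦ A p.1 p.2 ^ 2)
  simp only [← pow_mul, Fintype.sum_prod_type, card_univ, Fintype.card_prod, Nat.cast_mul,
    sum_sum_sq_eq_card_of_transpose_mul_self hA] at cauchy_schwarz
  have card_pos : (0 : ℝ) < Fintype.card n * Fintype.card n := by positivity
  nlinarith

end Matrix

/-- For any orthogonal matrix `A`, `‖A‖₄⁴ ∈ [1, n]`, with equality `‖A‖₄⁴ = n`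
iff `A` is a signed permutation matrix. -/
theorem l4_extrema_over_orthogonal_group {n : ℕ} (hn : 0 < n)
    (A : Matrix (Fin n) (Fin n) ℝ) (hA : Aᵀ * A = 1) :
    (1 ≤ l4pow4 A ∧ l4pow4 A ≤ n) ∧
      (l4pow4 A = n ↔ IsSignedPerm A) := by
  have : Nonempty (Fin n) := Fin.pos_iff_nonempty.mp hn
  have upper := sum_sum_pow_four_le_card_of_transpose_mul_self hA
  have equality := sum_sum_pow_four_eq_card_iff_of_transpose_mul_self hA
  rw [Fintype.card_fin] at upper equality
  exact ⟨⟨one_le_sum_sum_pow_four_of_transpose_mul_self hA, upper⟩,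
    equality.trans (and_iff_right hA).symm⟩
end

section
/- Let q be a unit vector in ℝⁿ and ε ∈ [0,1] with ∑ᵢ qᵢ⁴ ≥ 1 − ε. Then there exists an index i such that if qᵢ > 0 then ‖q − eᵢ‖₂² ≤ 2ε, and if qᵢ < 0 then ‖q + eᵢ‖₂² ≤ 2ε. -/
/-!
Let `i` maximise `qᵢ²`. Then `∑ⱼ qⱼ⁴ ≤ qᵢ² ∑ⱼ qⱼ² = qᵢ²`, and `qᵢ² ≤ |qᵢ|` because `|qᵢ| ≤ 1`,
so `1 - ε ≤ |qᵢ|`. Expanding the square, `‖q ∓ eᵢ‖₂² = 2 - 2|qᵢ|` for the sign of `qᵢ`.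
-/

open Finset

section

variable {ι : Type*} [Fintype ι]

lemma sum_pow_four_le_sq_mul_sum_sq (q : ι → ℝ) {i : ι} (hi : ∀ j, q j ^ 2 ≤ q i ^ 2) :
    ∑ j, q j ^ 4 ≤ q i ^ 2 * ∑ j, q j ^ 2 := by
  rw [mul_sum]
  gcongr with j
  calc q j ^ 4 = q j ^ 2 * q j ^ 2 := by ring
    _ ≤ q i ^ 2 * q j ^ 2 := mul_le_mul_of_nonneg_right (hi j) (sq_nonneg _)

lemma sq_le_abs_of_sum_sq_eq_one {q : ι → ℝ} (hq : ∑ j, q j ^ 2 = 1) (i : ι) :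
    q i ^ 2 ≤ |q i| := by
  have h_sq_le_one : q i ^ 2 ≤ 1 :=
    hq ▸ single_le_sum (fun j _ ↦ sq_nonneg (q j)) (mem_univ i)
  have h_abs_le_one : |q i| ≤ 1 := by rwa [← sq_le_one_iff_abs_le_one]
  rw [← sq_abs]
  nlinarith [abs_nonneg (q i)]

lemma sum_sq_add_ite [DecidableEq ι] (q : ι → ℝ) (i : ι) (c : ℝ) :
    ∑ j, (q j + if j = i then c else 0) ^ 2 = ∑ j, q j ^ 2 + 2 * c * q i + c ^ 2 := by
  have h_expand : ∀ j, (q j + if j = i then c else 0) ^ 2 =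
      q j ^ 2 + (if j = i then 2 * c * q j else 0) + (if j = i then c ^ 2 else 0) := by
    intro j
    split_ifs <;> ring
  simp only [h_expand, sum_add_distrib, sum_ite_eq', mem_univ, if_true]

lemma sum_sq_sub_ite [DecidableEq ι] (q : ι → ℝ) (i : ι) (c : ℝ) :
    ∑ j, (q j - if j = i then c else 0) ^ 2 = ∑ j, q j ^ 2 - 2 * c * q i + c ^ 2 := by
  have h_neg : ∀ j, (q j - if j = i then c else 0) = q j + if j = i then -c else 0 := by
    intro j
    split_ifs <;> ring
  simp only [h_neg, sum_sq_add_ite]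
  ring

end

theorem l4_single_vector_sphere_general {n : ℕ} (q : Fin n → ℝ)
    (hq : ∑ i, q i ^ 2 = 1)
    (ε : ℝ)
    (h : 1 - ε ≤ ∑ i, q i ^ 4) :
    ∃ i : Fin n,
      (0 < q i → ∑ j, (q j - (if j = i then (1:ℝ) else 0)) ^ 2 ≤ 2 * ε) ∧
      (q i < 0 → ∑ j, (q j + (if j = i then (1:ℝ) else 0)) ^ 2 ≤ 2 * ε) := by
  have h_nonempty : (univ : Finset (Fin n)).Nonempty := by
    by_contra h_empty
    simp [not_nonempty_iff_eq_empty.mp h_empty] at hq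
  obtain ⟨i, -, hi⟩ := exists_max_image univ (fun j ↦ q j ^ 2) h_nonempty
  have h_fourth := sum_pow_four_le_sq_mul_sum_sq q (fun j ↦ hi j (mem_univ j))
  have h_abs : 1 - ε ≤ |q i| := by
    rw [hq, mul_one] at h_fourth
    linarith [sq_le_abs_of_sum_sq_eq_one hq i]
  refine ⟨i, fun hpos ↦ ?_, fun hneg ↦ ?_⟩
  · rw [sum_sq_sub_ite, hq]
    linarith [abs_of_pos hpos]
  · rw [sum_sq_add_ite, hq]
    linarith [abs_of_neg hneg]

/-- If `q` is a unit vector in `ℝⁿ` with `∑ᵢ qᵢ⁴ ≥ 1 - ε` for `ε ∈ [0,1]`, then `q` is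
within squared ℓ²-distance `2ε` of a signed canonical basis vector: there is an index `i`
such that if `qᵢ > 0` then `‖q - eᵢ‖₂² ≤ 2ε`, and if `qᵢ < 0` then `‖q + eᵢ‖₂² ≤ 2ε`. -/
theorem l4_single_vector_sphere {n : ℕ} (q : Fin n → ℝ)
    (hq : ∑ i, q i ^ 2 = 1)
    (ε : ℝ) (hε : ε ∈ Set.Icc (0 : ℝ) 1)
    (h : 1 - ε ≤ ∑ i, q i ^ 4) :
    ∃ i : Fin n,
      (0 < q i → ∑ j, (q j - (if j = i then (1:ℝ) else 0)) ^ 2 ≤ 2 * ε) ∧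
      (q i < 0 → ∑ j, (q j + (if j = i then (1:ℝ) else 0)) ^ 2 ≤ 2 * ε) :=
  l4_single_vector_sphere_general q hq ε h
end

section
/- Let x ∈ ℝⁿ have i.i.d. Bernoulli–Gaussian(θ) entries and W ∈ O(n,ℝ). Then the expectation of the vector (Wx)^{∘3} xᵀ (outer product of the entrywise cube of Wx with x) satisfies E[(Wx)^{∘3} xᵀ] = 3θ(1−θ) W^{∘3} + 3θ² W, where W^{∘3} denotes entrywise cubing. -/
/-!
Write `x_l = B_l V_l` and `y = (W x)_i = ∑ l, W i l * x l`. The `x_l` are independent and centred,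
with `E[x_l²] = θ` and `E[x_l⁴] = θ E[V⁴] = 3θ`. Splitting `y = W i j * x_j + R`, where `R` involves
only the coordinates `l ≠ j` and is therefore independent of `x_j`, the odd powers of `x_j` and `R`
drop out of `E[y³ x_j]`, leaving `W i j ³ E[x_j⁴] + 3 W i j E[x_j²] E[R²]`. Finally
`E[R²] = θ (1 - W i j ²)` because the rows of an orthogonal matrix are unit vectors.
-/

open Matrix MeasureTheory ProbabilityTheory Finset

/-- Entrywise cube of a matrix. -/
def cube {n : ℕ} (W : Matrix (Fin n) (Fin n) ℝ) : Matrix (Fin n) (Fin n) ℝ :=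
  fun i j => W i j ^ 3

open scoped unitInterval NNReal

lemma hasDerivAt_mul_exp_mul_sq_div_two (v : ℝ) {p : ℝ → ℝ} {p' t : ℝ}
    (hp : HasDerivAt p p' t) :
    HasDerivAt (fun t ↦ p t * Real.exp (v * t ^ 2 / 2))
      ((p' + v * t * p t) * Real.exp (v * t ^ 2 / 2)) t := by
  have he := (((hasDerivAt_pow 2 t).const_mul v).div_const 2).exp
  exact (hp.fun_mul he).congr_deriv (by push_cast; ring)

namespace MeasureTheory

lemma MemLp.integrable_pow_of_le {Ω : Type*} [MeasurableSpace Ω] {μ : Measure Ω}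
    [IsFiniteMeasure μ] {f : Ω → ℝ} {p k : ℕ} (hf : MemLp f p μ) (hk : k ≤ p) :
    Integrable (fun ω ↦ f ω ^ k) μ := by
  have hfk : MemLp f k μ := hf.mono_exponent (by exact_mod_cast hk)
  refine hfk.integrable_norm_pow'.mono' (hf.aestronglyMeasurable.pow k) ?_
  exact .of_forall fun ω ↦ by simp [norm_pow]

end MeasureTheory

namespace ProbabilityTheory

lemma integral_pow_two_gaussianReal_zero (v : ℝ≥0) :
    ∫ x, x ^ 2 ∂gaussianReal 0 v = v := by
  rw [← variance_of_integral_eq_zero aemeasurable_id' (by simp), variance_fun_id_gaussianReal]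

-- The moments are derivatives at `0` of the moment generating function `t ↦ exp (v t² / 2)`.
lemma integral_pow_four_gaussianReal_zero (v : ℝ≥0) :
    ∫ x, x ^ 4 ∂gaussianReal 0 v = 3 * (v : ℝ) ^ 2 := by
  set e : ℝ → ℝ := fun t ↦ Real.exp (v * t ^ 2 / 2)
  have hderiv {p : ℝ → ℝ} (p' : ℝ → ℝ) (hp : ∀ t, HasDerivAt p (p' t) t) :
      deriv (fun t ↦ p t * e t) = fun t ↦ (p' t + v * t * p t) * e t :=
    funext fun t ↦ (hasDerivAt_mul_exp_mul_sq_div_two v (hp t)).deriv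
  have h1 : deriv e = fun t ↦ (v * t) * e t := by
    simpa using hderiv (p := fun _ ↦ 1) _ fun t ↦ hasDerivAt_const t (1 : ℝ)
  have h2 : deriv (fun t ↦ (v * t) * e t) = fun t ↦ (v + v ^ 2 * t ^ 2) * e t := by
    rw [hderiv _ fun t ↦ (hasDerivAt_id' t).const_mul (v : ℝ)]
    ext; ring
  have h3 : deriv (fun t ↦ (v + v ^ 2 * t ^ 2) * e t) =
      fun t ↦ (3 * v ^ 2 * t + v ^ 3 * t ^ 3) * e t := by
    rw [hderiv _ fun t ↦ ((hasDerivAt_pow 2 t).const_mul ((v : ℝ) ^ 2)).const_add (v : ℝ)]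
    ext; push_cast; ring
  have h4 : deriv (fun t ↦ (3 * v ^ 2 * t + v ^ 3 * t ^ 3) * e t) =
      fun t ↦ (3 * v ^ 2 + 6 * v ^ 3 * t ^ 2 + v ^ 4 * t ^ 4) * e t := by
    rw [hderiv _ fun t ↦ ((hasDerivAt_id' t).const_mul (3 * (v : ℝ) ^ 2)).fun_add
      ((hasDerivAt_pow 3 t).const_mul ((v : ℝ) ^ 3))]
    ext; push_cast; ring
  have hmgf : mgf id (gaussianReal 0 v) = e := by
    rw [mgf_id_gaussianReal]
    simp [e]
  calc ∫ x, x ^ 4 ∂gaussianReal 0 v = iteratedDeriv 4 (mgf id (gaussianReal 0 v)) 0 := by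
        rw [iteratedDeriv_mgf_zero (by simp)]
        rfl
    _ = 3 * (v : ℝ) ^ 2 := by
        simp only [iteratedDeriv_succ', iteratedDeriv_zero, hmgf, h1, h2, h3, h4]
        simp [e]

lemma bernoulliMeasure_one_zero_eq {θ : ℝ} (hθ : θ ∈ I) :
    Ber((1 : ℝ), 0, ⟨θ, hθ⟩) =
      ENNReal.ofReal (1 - θ) • Measure.dirac 0 + ENNReal.ofReal θ • Measure.dirac 1 := by
  rw [bernoulliMeasure_def, add_comm]
  congr 2 <;> ext <;> simp [hθ.1, hθ.2]

lemma integral_pow_bernoulliMeasure_one_zero (p : I) {k : ℕ} (hk : k ≠ 0) :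
    ∫ x, x ^ k ∂Ber((1 : ℝ), 0, p) = p := by
  simp [integral_bernoulliMeasure, hk]

section Laws

variable {Ω : Type*} [MeasurableSpace Ω] {μ : Measure Ω}

lemma hasLaw_of_map_eq {β : Type*} [MeasurableSpace β] {X : Ω → β} {ν : Measure β} [NeZero ν]
    (h : μ.map X = ν) : HasLaw X ν μ :=
  ⟨.of_map_ne_zero (h ▸ NeZero.ne ν), h⟩

lemma HasLaw.integral_pow {X : Ω → ℝ} {ν : Measure ℝ} (hX : HasLaw X ν μ) (k : ℕ) :
    ∫ ω, X ω ^ k ∂μ = ∫ x, x ^ k ∂ν :=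
  hX.integral_comp (f := fun x ↦ x ^ k) (by fun_prop)

lemma HasLaw.memLp_of_gaussianReal {V : Ω → ℝ} {m : ℝ} {v : ℝ≥0}
    (hV : HasLaw V (gaussianReal m v) μ) {q : ENNReal} (hq : q ≠ ⊤) : MemLp V q μ :=
  (hV.map_eq ▸ memLp_id_gaussianReal' q hq).comp_of_map hV.aemeasurable

lemma HasLaw.ae_eq_one_or_eq_zero {B : Ω → ℝ} {p : I} (hB : HasLaw B Ber((1 : ℝ), 0, p) μ) :
    ∀ᵐ ω ∂μ, B ω = 1 ∨ B ω = 0 := by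
  rw [hB.ae_iff (p := fun x ↦ x = 1 ∨ x = 0) (by fun_prop), ae_iff]
  exact bernoulliMeasure_apply_of_notMem_of_notMem p (by measurability) (by simp) (by simp)

lemma HasLaw.memLp_mul_of_bernoulliMeasure {B V : Ω → ℝ} {p : I} {q : ENNReal}
    (hB : HasLaw B Ber((1 : ℝ), 0, p) μ) (hV : MemLp V q μ) :
    MemLp (fun ω ↦ B ω * V ω) q μ := by
  refine hV.mono (hB.aemeasurable.aestronglyMeasurable.mul hV.1) ?_
  filter_upwards [hB.ae_eq_one_or_eq_zero] with ω hω
  rcases hω with h | h <;> simp [h]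

end Laws

section Independence

variable {Ω : Type*} [MeasurableSpace Ω] {μ : Measure Ω}

lemma iIndepFun.prodMk_of_sumElim {ι β : Type*} [Fintype ι] [MeasurableSpace β]
    {f g : ι → Ω → β} (hf : ∀ i, AEMeasurable (f i) μ) (hg : ∀ i, AEMeasurable (g i) μ)
    (h : iIndepFun (Sum.elim f g) μ) :
    iIndepFun (fun i ω ↦ (f i ω, g i ω)) μ := by
  have := h.isProbabilityMeasure
  have hfg : ∀ s, AEMeasurable (Sum.elim f g s) μ := by rintro (i | i); exacts [hf i, hg i]
  let e := (MeasurableEquiv.sumPiEquivProdPi fun _ : ι ⊕ ι ↦ β).trans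
    (MeasurableEquiv.arrowProdEquivProdArrow β β ι).symm
  have he : (fun ω i ↦ (f i ω, g i ω)) = e ∘ fun ω s ↦ Sum.elim f g s ω := rfl
  have hpair (i : ι) : μ.map (fun ω ↦ (f i ω, g i ω)) = (μ.map (f i)).prod (μ.map (g i)) :=
    (h.indepFun Sum.inl_ne_inr).map_prod_eq_prod_map_map (hf i) (hg i)
  rw [iIndepFun_iff_map_fun_eq_pi_map fun i ↦ (hf i).prodMk (hg i), he,
    ← AEMeasurable.map_map_of_aemeasurable e.measurable.aemeasurable
      (aemeasurable_pi_lambda _ hfg), h.map_fun_eq_pi_map hfg]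
  simp_rw [hpair]
  exact ((measurePreserving_sumPiEquivProdPi _).trans
    (measurePreserving_arrowProdEquivProdArrow β β ι _ _).symm).map_eq

lemma IndepFun.integral_fun_mul_pow {X Y : Ω → ℝ} (hXY : IndepFun X Y μ)
    (hX : AEMeasurable X μ) (hY : AEMeasurable Y μ) (k : ℕ) :
    ∫ ω, (X ω * Y ω) ^ k ∂μ = (∫ ω, X ω ^ k ∂μ) * ∫ ω, Y ω ^ k ∂μ := by
  simp_rw [mul_pow]
  have hXYk := hXY.comp (measurable_id.pow_const k) (measurable_id.pow_const k)
  exact hXYk.integral_fun_mul_eq_mul_integral (hX.pow_const k).aestronglyMeasurable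
    (hY.pow_const k).aestronglyMeasurable

lemma IndepFun.integral_mul_pow_of_hasLaw_bernoulliMeasure {B V : Ω → ℝ} {p : I}
    (hBV : IndepFun B V μ) (hB : HasLaw B Ber((1 : ℝ), 0, p) μ) (hV : AEMeasurable V μ)
    {k : ℕ} (hk : k ≠ 0) :
    ∫ ω, (B ω * V ω) ^ k ∂μ = p * ∫ ω, V ω ^ k ∂μ := by
  rw [hBV.integral_fun_mul_pow hB.aemeasurable hV, hB.integral_pow,
    integral_pow_bernoulliMeasure_one_zero p hk]

lemma IndepFun.integral_mul_add_pow_three_mul [IsProbabilityMeasure μ] {X R : Ω → ℝ}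
    (hXR : IndepFun X R μ) (hX : MemLp X 4 μ) (hR : MemLp R 4 μ) (hX0 : μ[X] = 0)
    (hR0 : μ[R] = 0) (a : ℝ) :
    ∫ ω, (a * X ω + R ω) ^ 3 * X ω ∂μ =
      a ^ 3 * ∫ ω, X ω ^ 4 ∂μ + 3 * a * (∫ ω, X ω ^ 2 ∂μ) * ∫ ω, R ω ^ 2 ∂μ := by
  have hindep (k m : ℕ) : IndepFun (fun ω ↦ X ω ^ k) (fun ω ↦ R ω ^ m) μ :=
    hXR.comp (measurable_id.pow_const k) (measurable_id.pow_const m)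
  have hint {k m : ℕ} (hk : k ≤ 4) (hm : m ≤ 4) :
      Integrable (fun ω ↦ X ω ^ k * R ω ^ m) μ :=
    (hindep k m).integrable_mul (hX.integrable_pow_of_le hk) (hR.integrable_pow_of_le hm)
  have hfac (k m : ℕ) : ∫ ω, X ω ^ k * R ω ^ m ∂μ = (∫ ω, X ω ^ k ∂μ) * ∫ ω, R ω ^ m ∂μ :=
    (hindep k m).integral_fun_mul_eq_mul_integral
      (hX.aestronglyMeasurable.pow k) (hR.aestronglyMeasurable.pow m)
  calc ∫ ω, (a * X ω + R ω) ^ 3 * X ω ∂μ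
      = ∫ ω, a ^ 3 * (X ω ^ 4 * R ω ^ 0) + 3 * a ^ 2 * (X ω ^ 3 * R ω ^ 1)
          + 3 * a * (X ω ^ 2 * R ω ^ 2) + X ω ^ 1 * R ω ^ 3 ∂μ := by
        congr with ω; ring
    _ = a ^ 3 * ∫ ω, X ω ^ 4 * R ω ^ 0 ∂μ + 3 * a ^ 2 * ∫ ω, X ω ^ 3 * R ω ^ 1 ∂μ
          + 3 * a * ∫ ω, X ω ^ 2 * R ω ^ 2 ∂μ + ∫ ω, X ω ^ 1 * R ω ^ 3 ∂μ := by
        rw [integral_add, integral_add, integral_add, integral_const_mul, integral_const_mul,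
          integral_const_mul]
        all_goals fun_prop (disch := omega)
    _ = a ^ 3 * ∫ ω, X ω ^ 4 ∂μ + 3 * a * (∫ ω, X ω ^ 2 ∂μ) * ∫ ω, R ω ^ 2 ∂μ := by
        rw [hfac 4 0, hfac 3 1, hfac 2 2, hfac 1 3]
        simp only [pow_zero, pow_one, hX0, hR0, integral_const, probReal_univ]
        ring

lemma iIndepFun.integral_sum_mul_sq {ι : Type*} {X : ι → Ω → ℝ} (hX : iIndepFun X μ)
    (hL2 : ∀ l, MemLp (X l) 2 μ) (hX0 : ∀ l, μ[X l] = 0) (s : Finset ι) (w : ι → ℝ) :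
    ∫ ω, (∑ l ∈ s, w l * X l ω) ^ 2 ∂μ = ∑ l ∈ s, w l ^ 2 * ∫ ω, X l ω ^ 2 ∂μ := by
  have := hX.isProbabilityMeasure
  have hwX : iIndepFun (fun l ω ↦ w l * X l ω) μ :=
    hX.comp (fun l x ↦ w l * x) fun l ↦ measurable_const.mul measurable_id
  have hsum := IndepFun.variance_sum (s := s) (fun l _ ↦ (hL2 l).const_mul (w l))
    fun l _ m _ hlm ↦ hwX.indepFun hlm
  rw [Finset.sum_fn] at hsum
  have hmean : μ[fun ω ↦ ∑ l ∈ s, w l * X l ω] = 0 := by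
    rw [integral_finsetSum _ fun l _ ↦ ((hL2 l).integrable one_le_two).const_mul (w l)]
    simp [integral_const_mul, hX0]
  have hmeas : AEMeasurable (fun ω ↦ ∑ l ∈ s, w l * X l ω) μ :=
    Finset.aemeasurable_fun_sum s fun l _ ↦ (hL2 l).aemeasurable.const_mul (w l)
  rw [← variance_of_integral_eq_zero hmeas hmean, hsum]
  refine Finset.sum_congr rfl fun l _ ↦ ?_
  rw [variance_const_mul, variance_of_integral_eq_zero (hL2 l).aemeasurable (hX0 l)]

lemma iIndepFun.integral_sum_mul_pow_three_mul {ι : Type*} [Fintype ι] {X : ι → Ω → ℝ}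
    (hX : iIndepFun X μ) (hL4 : ∀ l, MemLp (X l) 4 μ) (hX0 : ∀ l, μ[X l] = 0) {σ2 : ℝ}
    (hX2 : ∀ l, ∫ ω, X l ω ^ 2 ∂μ = σ2) (w : ι → ℝ) (j : ι) :
    ∫ ω, (∑ l, w l * X l ω) ^ 3 * X j ω ∂μ =
      (∫ ω, X j ω ^ 4 ∂μ - 3 * σ2 ^ 2) * w j ^ 3 + 3 * σ2 ^ 2 * (∑ l, w l ^ 2) * w j := by
  classical
  have := hX.isProbabilityMeasure
  set s := Finset.univ.erase j
  set R : Ω → ℝ := fun ω ↦ ∑ l ∈ s, w l * X l ω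
  have hsplit (ω : Ω) : ∑ l, w l * X l ω = w j * X j ω + R ω :=
    (Finset.add_sum_erase _ _ (Finset.mem_univ j)).symm
  have hXR : IndepFun (X j) R μ := by
    have h := hX.indepFun_finset₀ {j} s (by simp [s]) fun l ↦ (hL4 l).aemeasurable
    convert h.comp (φ := fun v : ({j} : Finset ι) → ℝ ↦ v ⟨j, Finset.mem_singleton_self j⟩)
      (ψ := fun v : s → ℝ ↦ ∑ l : s, w l * v l) (measurable_pi_apply (X := fun _ ↦ ℝ) _)
      (by fun_prop) using 1
    · rfl
    · ext ω
      exact (Finset.sum_coe_sort s fun l ↦ w l * X l ω).symm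
  have hR : MemLp R 4 μ := memLp_finsetSum s fun l _ ↦ (hL4 l).const_mul (w l)
  have hR0 : μ[R] = 0 := by
    rw [integral_finsetSum _ fun l _ ↦ ((hL4 l).integrable (by norm_num)).const_mul (w l)]
    simp [integral_const_mul, hX0]
  have hR2 : ∫ ω, R ω ^ 2 ∂μ = σ2 * (∑ l, w l ^ 2 - w j ^ 2) := by
    simp_rw [R, hX.integral_sum_mul_sq (fun l ↦ (hL4 l).mono_exponent (by norm_num)) hX0, hX2,
      ← Finset.sum_mul, s, Finset.sum_erase_eq_sub (Finset.mem_univ j)]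
    ring
  simp_rw [hsplit]
  rw [hXR.integral_mul_add_pow_three_mul (hL4 j) hR (hX0 j) hR0, hR2, hX2]
  ring

end Independence

end ProbabilityTheory

theorem expectation_cubed_outer_bernoulli_gaussian_general
    {Ωs : Type*} [MeasurableSpace Ωs] (μ : Measure Ωs)
    {n : ℕ} (θ : ℝ) (hθ : θ ∈ Set.Ioo (0 : ℝ) 1)
    (B V : Fin n → Ωs → ℝ)
    (hindep : iIndepFun (Sum.elim B V) μ)
    (hB : ∀ i, Measure.map (B i) μ
      = ENNReal.ofReal (1 - θ) • Measure.dirac (0 : ℝ) + ENNReal.ofReal θ • Measure.dirac 1)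
    (hV : ∀ i, Measure.map (V i) μ = gaussianReal 0 1)
    (W : Matrix (Fin n) (Fin n) ℝ) (hW : Wᵀ * W = 1) :
    ∀ i j, ∫ ω, (W.mulVec (fun l => B l ω * V l ω) i) ^ 3 * (B j ω * V j ω) ∂μ
      = 3 * θ * (1 - θ) * cube W i j + 3 * θ ^ 2 * W i j := by
  intro i j
  have hθI : θ ∈ I := Set.Ioo_subset_Icc_self hθ
  have hBlaw (l : Fin n) : HasLaw (B l) Ber((1 : ℝ), 0, ⟨θ, hθI⟩) μ :=
    hasLaw_of_map_eq ((hB l).trans (bernoulliMeasure_one_zero_eq hθI).symm)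
  have hVlaw (l : Fin n) : HasLaw (V l) (gaussianReal 0 1) μ := hasLaw_of_map_eq (hV l)
  have hX : iIndepFun (fun l ω ↦ B l ω * V l ω) μ :=
    (hindep.prodMk_of_sumElim (fun l ↦ (hBlaw l).aemeasurable)
      (fun l ↦ (hVlaw l).aemeasurable)).comp (fun _ x ↦ x.1 * x.2)
      fun _ ↦ measurable_fst.mul measurable_snd
  have hmom (l : Fin n) {k : ℕ} (hk : k ≠ 0) :
      ∫ ω, (B l ω * V l ω) ^ k ∂μ = θ * ∫ x, x ^ k ∂gaussianReal 0 1 := by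
    have hBV : IndepFun (B l) (V l) μ := hindep.indepFun Sum.inl_ne_inr
    rw [hBV.integral_mul_pow_of_hasLaw_bernoulliMeasure (hBlaw l) (hVlaw l).aemeasurable hk,
      (hVlaw l).integral_pow]
  have hL4 (l : Fin n) : MemLp (fun ω ↦ B l ω * V l ω) 4 μ :=
    (hBlaw l).memLp_mul_of_bernoulliMeasure ((hVlaw l).memLp_of_gaussianReal (by norm_num))
  have hrow : ∑ l, W i l ^ 2 = 1 := by
    have hWWt : W * Wᵀ = 1 := mul_eq_one_comm.mp hW
    simpa [Matrix.mul_apply, sq] using congrArg (fun M ↦ M i i) hWWt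
  have key := hX.integral_sum_mul_pow_three_mul (σ2 := θ) hL4
    (fun l ↦ by simpa using hmom l one_ne_zero)
    (fun l ↦ by simp [hmom l two_ne_zero, integral_pow_two_gaussianReal_zero]) (W i) j
  simp only [mulVec, dotProduct]
  rw [key, hmom j four_ne_zero, integral_pow_four_gaussianReal_zero, hrow, cube]
  push_cast
  ring

/-- Expectation of `(Wx)^{∘3} xᵀ` for a Bernoulli–Gaussian vector `x` and orthogonal `W`:
`E[(Wx)^{∘3} xᵀ] = 3θ(1-θ) W^{∘3} + 3θ² W`, entrywise. -/
theorem expectation_cubed_outer_bernoulli_gaussian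
    {Ωs : Type*} [MeasurableSpace Ωs] (μ : Measure Ωs) [IsProbabilityMeasure μ]
    {n : ℕ} (θ : ℝ) (hθ : θ ∈ Set.Ioo (0 : ℝ) 1)
    (B V : Fin n → Ωs → ℝ)
    (hindep : iIndepFun (Sum.elim B V) μ)
    (hB : ∀ i, Measure.map (B i) μ
      = ENNReal.ofReal (1 - θ) • Measure.dirac (0 : ℝ) + ENNReal.ofReal θ • Measure.dirac 1)
    (hV : ∀ i, Measure.map (V i) μ = gaussianReal 0 1)
    (W : Matrix (Fin n) (Fin n) ℝ) (hW : Wᵀ * W = 1) :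
    ∀ i j, ∫ ω, (W.mulVec (fun l => B l ω * V l ω) i) ^ 3 * (B j ω * V j ω) ∂μ
      = 3 * θ * (1 - θ) * cube W i j + 3 * θ ^ 2 * W i j :=
  expectation_cubed_outer_bernoulli_gaussian_general μ θ hθ B V hindep hB hV W hW
end

section
/- The critical points of the function g(W) = ‖W‖₄⁴ on the manifold O(n,ℝ) are exactly the orthogonal matrices W satisfying (W^{∘3})ᵀ W = Wᵀ W^{∘3}, i.e., the matrix (W^{∘3})ᵀW is symmetric. -/
/-!
Since `W Wᵀ = 1`, the Riemannian gradient simplifies to `½ (G - W Gᵀ W)` with `G = ∇g(W)`;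
multiplying `G = W Gᵀ W` on the left by `Wᵀ` turns it into `WᵀG = GᵀW`, and the factor `4`
in `G = 4 W^{∘3}` cancels.
-/

open Matrix Finset

section OrthogonalGroup

variable {m K : Type*} [Fintype m] [DecidableEq m]

theorem eq_mul_transpose_mul_iff [CommRing K] {W G : Matrix m m K} (hW : Wᵀ * W = 1) :
    G = W * (Gᵀ * W) ↔ Gᵀ * W = Wᵀ * G := by
  have hW' : W * Wᵀ = 1 := mul_eq_one_comm.mp hW
  constructor
  · intro h
    conv_rhs => rw [h, ← Matrix.mul_assoc, hW, Matrix.one_mul]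
  · intro h
    rw [h, ← Matrix.mul_assoc, hW', Matrix.one_mul]

variable [Field K] [CharZero K]

/-- `grad g(W)` of the paper, for the Euclidean gradient `G = ∇g(W)`. -/
def orthogonalRiemannianGrad (W G : Matrix m m K) : Matrix m m K :=
  G - (1 / 2 : K) • (W * (Wᵀ * G + Gᵀ * W))

theorem orthogonalRiemannianGrad_eq_half_smul {W : Matrix m m K} (G : Matrix m m K)
    (hW : W * Wᵀ = 1) :
    orthogonalRiemannianGrad W G = (1 / 2 : K) • (G - W * (Gᵀ * W)) := by
  have hWWG : W * (Wᵀ * G) = G := by rw [← Matrix.mul_assoc, hW, Matrix.one_mul]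
  rw [orthogonalRiemannianGrad, Matrix.mul_add, hWWG]
  module

theorem orthogonalRiemannianGrad_eq_zero_iff {W : Matrix m m K} (G : Matrix m m K)
    (hW : Wᵀ * W = 1) :
    orthogonalRiemannianGrad W G = 0 ↔ Gᵀ * W = Wᵀ * G := by
  rw [orthogonalRiemannianGrad_eq_half_smul G (mul_eq_one_comm.mp hW),
    smul_eq_zero_iff_right (by norm_num), sub_eq_zero, eq_mul_transpose_mul_iff hW]

end OrthogonalGroup

/-- Critical points of `g(W) = ‖W‖₄⁴` on the orthogonal group: the Riemannian gradient
`grad g(W) = ∇g(W) - ½ W (Wᵀ ∇g(W) + ∇g(W)ᵀ W)`, with Euclidean gradient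
`∇g(W) = 4 W^{∘3}`, vanishes at an orthogonal `W` if and only if
`(W^{∘3})ᵀ W = Wᵀ W^{∘3}`, i.e. `(W^{∘3})ᵀ W` is symmetric. -/
theorem l4_critical_points_orthogonal {n : ℕ}
    (W : Matrix (Fin n) (Fin n) ℝ) (hW : Wᵀ * W = 1) :
    ((4 : ℝ) • cube W
        - (1 / 2 : ℝ) • (W * (Wᵀ * ((4 : ℝ) • cube W) + ((4 : ℝ) • cube W)ᵀ * W)) = 0)
      ↔ (cube W)ᵀ * W = Wᵀ * cube W := by
  change orthogonalRiemannianGrad W ((4 : ℝ) • cube W) = 0 ↔ _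
  rw [orthogonalRiemannianGrad_eq_zero_iff _ hW, transpose_smul, smul_mul, Matrix.mul_smul]
  exact (smul_right_injective _ (by norm_num : (4 : ℝ) ≠ 0)).eq_iff
end

section
/- For any two orthogonal matrices W₁, W₂ ∈ O(n,ℝ), |‖W₁‖₄⁴ − ‖W₂‖₄⁴| ≤ 4n² ‖W₁ − W₂‖₂, where ‖·‖₂ is the spectral norm. -/
/-! Entries of an orthogonal matrix lie in `[-1, 1]`, where `t ↦ t⁴` is `4`-Lipschitz, and no
entry of a matrix exceeds its spectral norm in absolute value. So each of the `n²` terms of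
`‖W₁‖₄⁴ - ‖W₂‖₄⁴` is at most `4 ‖W₁ - W₂‖₂`. -/

open Matrix Finset

/-- The spectral (ℓ²-operator) norm of a square real matrix. -/
noncomputable def specNorm {n : ℕ} (A : Matrix (Fin n) (Fin n) ℝ) : ℝ :=
  ‖LinearMap.toContinuousLinearMap (Matrix.toEuclideanLin A)‖

theorem abs_pow_sub_pow_le_of_abs_le_one {α : Type*} [CommRing α] [LinearOrder α]
    [IsOrderedRing α] {a b : α} (ha : |a| ≤ 1) (hb : |b| ≤ 1) (k : ℕ) :
    |a ^ k - b ^ k| ≤ k * |a - b| :=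
  calc |a ^ k - b ^ k| ≤ |a - b| * k * max |a| |b| ^ (k - 1) := abs_pow_sub_pow_le a b k
    _ ≤ |a - b| * k * 1 := by gcongr; exact pow_le_one₀ (by positivity) (max_le ha hb)
    _ = k * |a - b| := by ring

theorem Matrix.abs_apply_le_one_of_transpose_mul_self_eq_one {ι : Type*} [Fintype ι]
    [DecidableEq ι] {W : Matrix ι ι ℝ} (hW : Wᵀ * W = 1) (i j : ι) : |W i j| ≤ 1 :=
  entry_norm_bound_of_unitary (mem_unitaryGroup_iff'.2 hW) i j

section L2OpNorm

open scoped Matrix.Norms.L2Operator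

theorem Matrix.norm_apply_le_l2_opNorm {𝕜 m n : Type*} [RCLike 𝕜] [Fintype m] [Fintype n]
    [DecidableEq n] (A : Matrix m n 𝕜) (i : m) (j : n) : ‖A i j‖ ≤ ‖A‖ := by
  let e := EuclideanSpace.single j (1 : 𝕜)
  calc ‖A i j‖ = ‖(EuclideanSpace.equiv m 𝕜).symm (A *ᵥ e) i‖ := by simp [e]
    _ ≤ ‖(EuclideanSpace.equiv m 𝕜).symm (A *ᵥ e)‖ := PiLp.norm_apply_le _ i
    _ ≤ ‖A‖ * ‖e‖ := A.l2_opNorm_mulVec e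
    _ = ‖A‖ := by simp [e]

theorem abs_apply_le_specNorm {n : ℕ} (A : Matrix (Fin n) (Fin n) ℝ) (i j : Fin n) :
    |A i j| ≤ specNorm A :=
  A.norm_apply_le_l2_opNorm i j

end L2OpNorm

theorem abs_l4pow4_sub_le {n : ℕ} {A B : Matrix (Fin n) (Fin n) ℝ} {c : ℝ}
    (hA : ∀ i j, |A i j| ≤ 1) (hB : ∀ i j, |B i j| ≤ 1) (hAB : ∀ i j, |A i j - B i j| ≤ c) :
    |l4pow4 A - l4pow4 B| ≤ 4 * (n : ℝ) ^ 2 * c :=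
  calc |l4pow4 A - l4pow4 B| = |∑ i, ∑ j, (A i j ^ 4 - B i j ^ 4)| := by
        simp only [l4pow4, sum_sub_distrib]
    _ ≤ ∑ i, ∑ j, |A i j ^ 4 - B i j ^ 4| :=
        (abs_sum_le_sum_abs _ _).trans (sum_le_sum fun i _ ↦ abs_sum_le_sum_abs _ _)
    _ ≤ ∑ _i : Fin n, ∑ _j : Fin n, 4 * c := by
        gcongr with i _ j _
        calc |A i j ^ 4 - B i j ^ 4| ≤ (4 : ℕ) * |A i j - B i j| :=
              abs_pow_sub_pow_le_of_abs_le_one (hA i j) (hB i j) 4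
          _ ≤ 4 * c := by push_cast; gcongr; exact hAB i j
    _ = 4 * (n : ℝ) ^ 2 * c := by
        simp only [sum_const, card_univ, Fintype.card_fin, nsmul_eq_mul]
        ring

/-- Lipschitz bound for the ℓ⁴-norm over the orthogonal group:
`|‖W₁‖₄⁴ − ‖W₂‖₄⁴| ≤ 4n² ‖W₁ − W₂‖₂`. -/
theorem l4_lipschitz_orthogonal {n : ℕ}
    (W₁ W₂ : Matrix (Fin n) (Fin n) ℝ)
    (hW₁ : W₁ᵀ * W₁ = 1) (hW₂ : W₂ᵀ * W₂ = 1) :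
    |l4pow4 W₁ - l4pow4 W₂| ≤ 4 * (n : ℝ) ^ 2 * specNorm (W₁ - W₂) :=
  abs_l4pow4_sub_le (abs_apply_le_one_of_transpose_mul_self_eq_one hW₁)
    (abs_apply_le_one_of_transpose_mul_self_eq_one hW₂)
    (abs_apply_le_specNorm (W₁ - W₂))
end
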